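/- arXiv:2308.06604 — 3 statements merged into one kernel-verified Lean document; each statement's English description precedes it below -/
import Mathlib

section
/- Define g(p) = (1/4) ∫₀^(2^(1/p)) (2 - u^p)^(1/p) du for p ∈ (0,1]. Then g(p) tends to +∞ as p → 0⁺. -/
open Real Filter

/-- `g(p) = (1/4) ∫₀^(2^(1/p)) (2 - u^p)^(1/p) du` for `p ∈ (0,1]`. -/
noncomputable def gInt (p : ℝ) : ℝ :=
  (1/4) * ∫ u in (0:ℝ)..((2:ℝ) ^ (1 / p)), (2 - u ^ p) ^ (1 / p)

/-! With `y = u ^ p` one has `u · (2 - u ^ p) ^ (1/p) = ((2 - y) y) ^ (1/p) = (1 - (y - 1)²) ^ (1/p)`.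
For `1 ≤ u ≤ (1 + √p) ^ (1/p)` this is at least `(1 - p) ^ (1/p) ≥ e⁻²`, so there the integrand
dominates `e⁻² / u`, whose integral over that range is `e⁻² log (1 + √p) / p ≥ e⁻² / (2√p)`.
Hence `g(p) ≥ e⁻² p^(-1/2) / 8 → ∞`. -/

lemma half_le_log_one_add {x : ℝ} (hx0 : 0 ≤ x) (hx1 : x ≤ 1) : x / 2 ≤ log (1 + x) := by
  have hlog := one_sub_inv_le_log_of_pos (by linarith : 0 < 1 + x)
  have : x / 2 ≤ 1 - (1 + x)⁻¹ := by
    rw [div_le_iff₀ two_pos, ← sub_nonneg]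
    field_simp
    nlinarith
  linarith

lemma one_div_two_mul_sqrt_le_log_one_add_sqrt_rpow {p : ℝ} (hp0 : 0 < p) (hp : p ≤ 1) :
    1 / (2 * √p) ≤ log ((1 + √p) ^ (1 / p)) := by
  rw [log_rpow (by positivity), one_div_mul_eq_div, div_le_div_iff₀ (by positivity) hp0]
  have := half_le_log_one_add (sqrt_nonneg p) (sqrt_le_one.mpr hp)
  nlinarith [sq_sqrt hp0.le, sqrt_nonneg p]

lemma exp_neg_two_le_one_sub_rpow {p : ℝ} (hp0 : 0 < p) (hp : p ≤ 1 / 2) :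
    exp (-2) ≤ (1 - p) ^ (1 / p) := by
  have h1p : 0 < 1 - p := by linarith
  have hlog : -(2 * p) ≤ log (1 - p) := by
    refine le_trans ?_ (one_sub_inv_le_log_of_pos h1p)
    rw [← sub_nonneg]
    field_simp
    nlinarith
  rw [rpow_def_of_pos h1p, exp_le_exp, mul_one_div, le_div_iff₀ hp0]
  linarith

lemma exp_neg_two_le_two_sub_mul_rpow {p y : ℝ} (hp0 : 0 < p) (hp : p ≤ 1 / 2)
    (hy : |y - 1| ≤ √p) : exp (-2) ≤ ((2 - y) * y) ^ (1 / p) := by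
  have hsq : (y - 1) ^ 2 ≤ p := by
    simpa [sq_abs, sq_sqrt hp0.le] using pow_le_pow_left₀ (abs_nonneg _) hy 2
  calc exp (-2) ≤ (1 - p) ^ (1 / p) := exp_neg_two_le_one_sub_rpow hp0 hp
    _ ≤ ((2 - y) * y) ^ (1 / p) :=
      rpow_le_rpow (by linarith) (by nlinarith) (by positivity)

lemma exp_neg_two_div_le_two_sub_rpow {p u : ℝ} (hp0 : 0 < p) (hp : p ≤ 1 / 2)
    (hu : 1 ≤ u) (hup : u ^ p ≤ 1 + √p) : exp (-2) / u ≤ (2 - u ^ p) ^ (1 / p) := by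
  have hu0 : 0 < u := by linarith
  have hup1 : 1 ≤ u ^ p := one_le_rpow hu hp0.le
  have hsqrt : √p ≤ 1 := sqrt_le_one.mpr (by linarith)
  have hy : |u ^ p - 1| ≤ √p := by rw [abs_of_nonneg (by linarith)]; linarith
  have hmerge : (2 - u ^ p) ^ (1 / p) * u = ((2 - u ^ p) * u ^ p) ^ (1 / p) := by
    rw [mul_rpow (by linarith) (by linarith), ← rpow_mul hu0.le, mul_one_div_cancel hp0.ne',
      rpow_one]
  rw [div_le_iff₀ hu0, hmerge]
  exact exp_neg_two_le_two_sub_mul_rpow hp0 hp hy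

lemma two_sub_rpow_rpow_nonneg {p u : ℝ} (hp0 : 0 < p) (hu0 : 0 ≤ u) (hu : u ≤ 2 ^ (1 / p)) :
    0 ≤ (2 - u ^ p) ^ (1 / p) := by
  have hup : u ^ p ≤ (2 ^ (1 / p)) ^ p := rpow_le_rpow hu0 hu hp0.le
  rw [← rpow_mul zero_le_two, one_div_mul_cancel hp0.ne', rpow_one] at hup
  exact rpow_nonneg (by linarith) _

lemma continuous_two_sub_rpow_rpow {p : ℝ} (hp0 : 0 < p) :
    Continuous fun u : ℝ => (2 - u ^ p) ^ (1 / p) :=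
  (continuous_rpow_const (by positivity)).comp
    (continuous_const.sub (continuous_rpow_const hp0.le))

lemma exp_neg_two_div_sqrt_le_integral {p : ℝ} (hp0 : 0 < p) (hp : p ≤ 1 / 2) :
    exp (-2) / (2 * √p) ≤ ∫ u in (0:ℝ)..2 ^ (1 / p), (2 - u ^ p) ^ (1 / p) := by
  set b := (1 + √p) ^ (1 / p)
  have hbp : b ^ p = 1 + √p := by
    rw [← rpow_mul (by positivity), one_div_mul_cancel hp0.ne', rpow_one]
  have hb1 : 1 ≤ b := one_le_rpow (by linarith [sqrt_nonneg p]) (by positivity)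
  have hb2 : b ≤ 2 ^ (1 / p) :=
    rpow_le_rpow (by positivity) (by linarith [sqrt_le_one.mpr (by linarith : p ≤ 1)])
      (by positivity)
  have hint := continuous_two_sub_rpow_rpow hp0
  calc exp (-2) / (2 * √p) ≤ exp (-2) * log b := by
        rw [div_eq_mul_one_div]
        gcongr
        exact one_div_two_mul_sqrt_le_log_one_add_sqrt_rpow hp0 (by linarith)
    _ = ∫ u in (1:ℝ)..b, exp (-2) / u := by
        simp_rw [div_eq_mul_inv, intervalIntegral.integral_const_mul,
          integral_inv_of_pos one_pos (one_pos.trans_le hb1), div_one]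
    _ ≤ ∫ u in (1:ℝ)..b, (2 - u ^ p) ^ (1 / p) := by
        refine intervalIntegral.integral_mono_on hb1 ?_ (hint.intervalIntegrable _ _) ?_
        · refine (continuousOn_const.div continuousOn_id fun u hu => ?_).intervalIntegrable
          rw [Set.uIcc_of_le hb1] at hu
          exact (one_pos.trans_le hu.1).ne'
        · intro u hu
          exact exp_neg_two_div_le_two_sub_rpow hp0 hp hu.1
            (hbp ▸ rpow_le_rpow (by linarith [hu.1]) hu.2 hp0.le)
    _ ≤ ∫ u in (0:ℝ)..2 ^ (1 / p), (2 - u ^ p) ^ (1 / p) :=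
        intervalIntegral.integral_mono_interval zero_le_one hb1 hb2
          ((MeasureTheory.ae_restrict_mem measurableSet_Ioc).mono
            fun u hu => two_sub_rpow_rpow_nonneg hp0 hu.1.le hu.2)
          (hint.intervalIntegrable _ _)

/-- `g(p) → +∞` as `p → 0⁺`. -/
theorem gInt_tendsto_atTop :
    Tendsto gInt (nhdsWithin 0 (Set.Ioi 0)) atTop := by
  have hbound : ∀ᶠ p in nhdsWithin (0:ℝ) (Set.Ioi 0),
      exp (-2) / 8 * p ^ (-(1 / 2) : ℝ) ≤ gInt p := by
    filter_upwards [Ioc_mem_nhdsGT (by norm_num : (0:ℝ) < 1 / 2)] with p ⟨hp0, hp⟩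
    rw [rpow_neg hp0.le, ← sqrt_eq_rpow, gInt]
    calc exp (-2) / 8 * (√p)⁻¹ = 1 / 4 * (exp (-2) / (2 * √p)) := by ring
      _ ≤ _ := by gcongr; exact exp_neg_two_div_sqrt_le_integral hp0 hp
  exact tendsto_atTop_mono' _ hbound
    ((tendsto_rpow_neg_nhdsGT_zero (by norm_num)).const_mul_atTop (by positivity))
end

section
/- For every u ≥ 1 and every p ∈ (0,1] with u^p ≤ 2, one has (2 - u^p)^(1/p) ≤ 1/u. -/
open Real

/-! With `x = u ^ p`, the hypothesis reads `2 - x ≥ 0` and the claim, after raising both sides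
to the power `p`, reads `2 - x ≤ x⁻¹`, which is the AM-GM inequality `x + x⁻¹ ≥ 2`. -/

lemma two_sub_le_inv {x : ℝ} (hx : 0 < x) : 2 - x ≤ x⁻¹ := by
  calc 2 - x = x⁻¹ - (x - 1) ^ 2 / x := by field_simp; ring
    _ ≤ x⁻¹ := sub_le_self _ (by positivity)

/-- For every `u ≥ 1` and every `p ∈ (0,1]` with `u^p ≤ 2`, one has `(2 - u^p)^(1/p) ≤ 1/u`. -/
theorem pointwise_bound (u p : ℝ) (hu : 1 ≤ u) (hp : p ∈ Set.Ioc (0:ℝ) 1)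
    (hup : u ^ p ≤ 2) :
    (2 - u ^ p) ^ (1 / p) ≤ 1 / u := by
  have hu0 : 0 < u := by linarith
  have hp0 : 0 < p := hp.1
  rw [one_div, one_div, rpow_inv_le_iff_of_pos (sub_nonneg.2 hup) (inv_nonneg.2 hu0.le) hp0,
    inv_rpow hu0.le]
  exact two_sub_le_inv (rpow_pos_of_pos hu0 p)
end

section
/- For p ∈ (0,1] and integer k ≥ 1, the area of the truncated region X_k(p) satisfies Area(X_k(p)) ≤ 2^(-2/p)·(1 + log 4 + log k). -/
/-!
On `X_k(p)` the constraint `x^p + y^p ≤ 1` forces `(xy)^p ≤ ((x^p + y^p)/2)^2 ≤ 1/4`, i.e.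
`xy ≤ c := 2^(-2/p)`, and also `x, y ≤ 1`. So `X_k(p)` lies in the part of the square
`[0, M]²`, `M = min (x_k(p), 1)`, below the hyperbola `xy = c`, whose area is at most
`c (1 + log (M² / c))`. Finally `M² ≤ 4kc`: writing `t = k^(p/(1-p))` one has
`x_k(p) = k (1 + t)^(1 - 1/p)`, and AM-GM `1 + t ≥ 2√t` gives `x_k(p) ≤ 2√k · 2^(-1/p)`.
-/

open Real Set MeasureTheory

/-- `x_k(p) = (1 + k^(p/(p-1)))^(-1/p) + k·(1 + k^(p/(1-p)))^(-1/p)`. -/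
noncomputable def xkFun (k : ℕ) (p : ℝ) : ℝ :=
  (1 + (k : ℝ) ^ (p / (p - 1))) ^ (-(1 / p))
    + (k : ℝ) * (1 + (k : ℝ) ^ (p / (1 - p))) ^ (-(1 / p))

def underHyperbola (M c : ℝ) : Set (ℝ × ℝ) :=
  {q | q.1 ∈ Icc 0 M ∧ q.2 ∈ Icc 0 M ∧ q.1 * q.2 ≤ c}

theorem volume_region_between_cc_eq_lintegral {α : Type*} [MeasurableSpace α] {μ : Measure α}
    [SFinite μ] {f g : α → ℝ} {s : Set α} (hf : Measurable f) (hg : Measurable g)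
    (hs : MeasurableSet s) :
    μ.prod volume {q : α × ℝ | q.1 ∈ s ∧ q.2 ∈ Icc (f q.1) (g q.1)} =
      ∫⁻ x in s, ENNReal.ofReal (g x - f x) ∂μ := by
  classical
  rw [Measure.prod_apply (measurableSet_region_between_cc hf hg hs),
    ← lintegral_indicator hs]
  congr with x
  by_cases hx : x ∈ s
  · simp only [preimage, mem_ofPred_eq, hx, true_and, indicator_of_mem, ofPred_mem_eq]
    exact Real.volume_Icc
  · simp [hx, preimage]

theorem volume_underHyperbola_le {M a c : ℝ} (ha : 0 < a) (haM : a ≤ M) (hc : 0 ≤ c) :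
    volume (underHyperbola M c) ≤ ENNReal.ofReal (M * a + c * log (M / a)) := by
  have hcover : underHyperbola M c ⊆
      Icc 0 a ×ˢ Icc 0 M ∪ {q | q.1 ∈ Ioc a M ∧ q.2 ∈ Icc 0 (c / q.1)} := by
    rintro ⟨x, y⟩ ⟨hx, hy, hxy⟩
    rcases le_or_gt x a with hxa | hxa
    · exact Or.inl ⟨⟨hx.1, hxa⟩, hy⟩
    · exact Or.inr ⟨⟨hxa, hx.2⟩, hy.1, (le_div_iff₀' (ha.trans hxa)).2 hxy⟩
  have hbox : volume (Icc 0 a ×ˢ Icc 0 M) = ENNReal.ofReal (M * a) := by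
    rw [Measure.volume_eq_prod, Measure.prod_prod, Real.volume_Icc, Real.volume_Icc,
      ← ENNReal.ofReal_mul (by linarith), mul_comm]
    simp
  have hint : ∫ x in Ioc a M, c / x = c * log (M / a) := by
    simp_rw [← intervalIntegral.integral_of_le haM, div_eq_mul_inv,
      intervalIntegral.integral_const_mul, integral_inv_of_pos ha (ha.trans_le haM), div_eq_mul_inv]
  have hunder : volume {q : ℝ × ℝ | q.1 ∈ Ioc a M ∧ q.2 ∈ Icc 0 (c / q.1)} =
      ENNReal.ofReal (c * log (M / a)) := by
    have hregion := volume_region_between_cc_eq_lintegral (μ := volume) (f := fun _ => 0)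
      (g := fun x => c / x) measurable_const (by fun_prop) (measurableSet_Ioc (a := a) (b := M))
    simp only [sub_zero] at hregion
    rw [Measure.volume_eq_prod, hregion, ← hint, ofReal_integral_eq_lintegral_ofReal]
    · exact (ContinuousOn.integrableOn_Icc (continuousOn_const.div continuousOn_id
        fun x hx => (ha.trans_le hx.1).ne')).mono_set Ioc_subset_Icc_self
    · filter_upwards [ae_restrict_mem measurableSet_Ioc] with x hx
      exact div_nonneg hc (ha.trans hx.1).le
  calc _ ≤ _ := measure_mono hcover
    _ ≤ _ := measure_union_le _ _
    _ = _ := by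
      rw [hbox, hunder, ← ENNReal.ofReal_add (mul_nonneg (ha.le.trans haM) ha.le)
        (mul_nonneg hc (log_nonneg ((one_le_div ha).2 haM)))]

theorem volume_underHyperbola_le_of_sq_le {M c L : ℝ} (hM : 0 < M) (hc : 0 < c) (hL : 1 ≤ L)
    (hML : M ^ 2 ≤ L * c) :
    volume (underHyperbola M c) ≤ ENNReal.ofReal (c * (1 + log L)) := by
  have hlogL : 0 ≤ log L := log_nonneg hL
  rcases le_total (M ^ 2) c with hMc | hcM
  · refine (volume_underHyperbola_le hM le_rfl hc.le).trans (ENNReal.ofReal_le_ofReal ?_)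
    rw [div_self hM.ne', log_one]
    nlinarith
  · -- cut where the hyperbola `xy = c` leaves the square through its top edge
    have ha : 0 < c / M := div_pos hc hM
    refine (volume_underHyperbola_le ha ((div_le_iff₀ hM).2 (by nlinarith)) hc.le).trans
      (ENNReal.ofReal_le_ofReal ?_)
    have hratio : M / (c / M) ≤ L := by
      rw [div_div_eq_mul_div, div_le_iff₀ hc]; nlinarith
    rw [mul_div_cancel₀ _ hM.ne']
    nlinarith [log_le_log (div_pos hM ha) hratio]

theorem le_one_of_rpow_add_rpow_le_one {p x y : ℝ} (hp : 0 < p) (hx : 0 ≤ x) (hy : 0 ≤ y)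
    (h : x ^ p + y ^ p ≤ 1) : x ≤ 1 := by
  rw [← rpow_le_rpow_iff hx zero_le_one hp, one_rpow]
  linarith [rpow_nonneg hy p]

theorem mul_le_of_rpow_add_rpow_le_one {p x y : ℝ} (hp : 0 < p) (hx : 0 ≤ x) (hy : 0 ≤ y)
    (h : x ^ p + y ^ p ≤ 1) : x * y ≤ 2 ^ (-(2 / p)) := by
  have hc : ((2 : ℝ) ^ (-(2 / p))) ^ p = 1 / 4 := by
    rw [← rpow_mul zero_le_two, show -(2 / p) * p = -2 by field_simp, rpow_neg zero_le_two]
    norm_num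
  rw [← rpow_le_rpow_iff (mul_nonneg hx hy) (by positivity) hp, hc, mul_rpow hx hy]
  nlinarith [sq_nonneg (x ^ p - y ^ p), rpow_nonneg hx p, rpow_nonneg hy p]

section xkFun

variable {k : ℕ} {p : ℝ}

theorem xkFun_eq (hp0 : 0 < p) (hp1 : p < 1) (hk : 0 < k) :
    xkFun k p = k * (1 + (k : ℝ) ^ (p / (1 - p))) ^ (1 - 1 / p) := by
  have hk0 : (0 : ℝ) < k := Nat.cast_pos.2 hk
  set t : ℝ := (k : ℝ) ^ (p / (1 - p))
  have ht : 0 < t := by positivity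
  have hinv : (k : ℝ) ^ (p / (p - 1)) = t⁻¹ := by
    rw [← rpow_neg hk0.le, ← div_neg, neg_sub]
  have hpow : t ^ (1 / p) = k * t := by
    rw [← rpow_mul hk0.le, show p / (1 - p) * (1 / p) = 1 + p / (1 - p) by
      field_simp [show 1 - p ≠ 0 by linarith]; ring, rpow_add hk0, rpow_one]
  have hfirst : (1 + t⁻¹) ^ (-(1 / p)) = k * t * (1 + t) ^ (-(1 / p)) := by
    rw [show 1 + t⁻¹ = (1 + t) / t by field_simp; ring, div_rpow (by positivity) ht.le,
      rpow_neg ht.le, div_inv_eq_mul, hpow, mul_comm]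
  rw [xkFun, hinv, hfirst, show 1 - 1 / p = 1 + -(1 / p) by ring, rpow_add (by positivity),
    rpow_one]
  ring

theorem xkFun_le (hp0 : 0 < p) (hp1 : p < 1) (hk : 0 < k) :
    xkFun k p ≤ √k * 2 ^ (1 - 1 / p) := by
  have hk0 : (0 : ℝ) < k := Nat.cast_pos.2 hk
  set t : ℝ := (k : ℝ) ^ (p / (1 - p))
  set r : ℝ := 1 - 1 / p
  have ht : 0 < t := by positivity
  have hr : r ≤ 0 := by
    have : 1 ≤ 1 / p := by rw [le_div_iff₀ hp0]; linarith
    linarith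
  have hsqrt : √t ^ (-r) = √k := by
    rw [sqrt_eq_rpow, sqrt_eq_rpow, ← rpow_mul hk0.le, ← rpow_mul hk0.le]
    congr 1
    simp only [r]
    field_simp [show 1 - p ≠ 0 by linarith]
    ring
  have hamgm : 2 ≤ (1 + t) / √t := by
    rw [le_div_iff₀ (sqrt_pos.2 ht)]
    nlinarith [sq_nonneg (√t - 1), sq_sqrt ht.le]
  calc xkFun k p = √k * (√t ^ (-r) * (1 + t) ^ r) := by
        rw [xkFun_eq hp0 hp1 hk, hsqrt, ← mul_assoc, mul_self_sqrt hk0.le]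
    _ = √k * ((1 + t) / √t) ^ r := by
        rw [div_rpow (by positivity) (sqrt_nonneg t), rpow_neg (sqrt_nonneg t), div_eq_mul_inv,
          mul_comm (_ ^ r)]
    _ ≤ √k * 2 ^ r :=
        mul_le_mul_of_nonneg_left (rpow_le_rpow_of_nonpos two_pos hamgm hr) (sqrt_nonneg _)

theorem min_xkFun_one_sq_le (hp : p ∈ Ioc 0 1) (hk : 1 ≤ k) :
    min (xkFun k p) 1 ^ 2 ≤ 4 * (k : ℝ) * 2 ^ (-(2 / p)) := by
  have hbound : min (xkFun k p) 1 ≤ √k * 2 ^ (1 - 1 / p) := by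
    rcases hp.2.lt_or_eq with hp1 | rfl
    · exact (min_le_left _ _).trans (xkFun_le hp.1 hp1 hk)
    · simpa using (min_le_right _ _).trans (one_le_sqrt.2 (Nat.one_le_cast.2 hk))
  calc min (xkFun k p) 1 ^ 2 ≤ (√k * 2 ^ (1 - 1 / p)) ^ 2 := by
        gcongr
        exact le_min (by unfold xkFun; positivity) zero_le_one
    _ = 4 * (k : ℝ) * 2 ^ (-(2 / p)) := by
        rw [mul_pow, sq_sqrt k.cast_nonneg, ← rpow_natCast, ← rpow_mul zero_le_two,
          show (1 - 1 / p) * ((2 : ℕ) : ℝ) = 2 + -(2 / p) by push_cast; ring,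
          rpow_add two_pos]
        norm_num
        ring

end xkFun

/-- For `p ∈ (0,1]` and integer `k ≥ 1`, the area of the truncated region `X_k(p)`
satisfies `Area(X_k(p)) ≤ 2^(-2/p)·(1 + log 4 + log k)`. -/
theorem area_truncated_region_le (p : ℝ) (hp : p ∈ Set.Ioc (0:ℝ) 1) (k : ℕ) (hk : 1 ≤ k) :
    (volume {q : ℝ × ℝ | 0 ≤ q.1 ∧ 0 ≤ q.2 ∧ q.1 ^ p + q.2 ^ p ≤ 1 ∧
        max q.1 q.2 ≤ xkFun k p}).toReal
      ≤ (2:ℝ) ^ (-(2 / p)) * (1 + Real.log 4 + Real.log k) := by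
  set c : ℝ := 2 ^ (-(2 / p))
  set M : ℝ := min (xkFun k p) 1
  have hk1 : (1 : ℝ) ≤ k := Nat.one_le_cast.2 hk
  have hsub : {q : ℝ × ℝ | 0 ≤ q.1 ∧ 0 ≤ q.2 ∧ q.1 ^ p + q.2 ^ p ≤ 1 ∧
      max q.1 q.2 ≤ xkFun k p} ⊆ underHyperbola M c := by
    rintro ⟨x, y⟩ ⟨hx, hy, hxy, hmax⟩
    rw [max_le_iff] at hmax
    refine ⟨⟨hx, le_min hmax.1 (le_one_of_rpow_add_rpow_le_one hp.1 hx hy hxy)⟩,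
      ⟨hy, le_min hmax.2 (le_one_of_rpow_add_rpow_le_one hp.1 hy hx (by linarith))⟩,
      mul_le_of_rpow_add_rpow_le_one hp.1 hx hy hxy⟩
  have hM : 0 < M := lt_min (by unfold xkFun; positivity) one_pos
  have hvol := (measure_mono hsub).trans (volume_underHyperbola_le_of_sq_le hM (by positivity)
    (by linarith : (1 : ℝ) ≤ 4 * k) (min_xkFun_one_sq_le hp hk))
  rw [log_mul (by norm_num) (by positivity), ← add_assoc] at hvol
  exact ENNReal.toReal_le_of_le_ofReal (by positivity) hvol
end
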